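/- Let f : ℝ^P → ℝ^N be continuously differentiable with Jacobian J(θ) ∈ ℝ^{N×P}, let Y ∈ ℝ^N and g(θ) = f(θ) − Y, and fix θ₀ ∈ ℝ^P. Let K ≥ 1, R₀ > 0, 0 < λ_min ≤ λ_max, let Θ be a symmetric real N×N matrix with λ_min ‖v‖₂² ≤ vᵀ Θ v ≤ λ_max ‖v‖₂² for all v, and let 0 < η₀ < 2/(λ_min + λ_max). Let n > 0 satisfy n ≥ (18 K³ R₀ / λ_min²)², and assume: (i) for all θ, θ̃ in the closed ball B(θ₀, 3KR₀/(λ_min √n)): ‖J(θ) − J(θ̃)‖_F ≤ K √n ‖θ − θ̃‖₂ and ‖J(θ)‖_F ≤ K √n; (ii) ‖g(θ₀)‖₂ ≤ R₀; (iii) ‖Θ − (1/n) J(θ₀) J(θ₀)ᵀ‖_F ≤ λ_min/3. Define the gradient descent iterates θ_{t+1} = θ_t − (η₀/n) J(θ_t)ᵀ g(θ_t). Then for every t ∈ ℕ: ‖g(θ_t)‖₂ ≤ (1 − η₀ λ_min/3)^t R₀, the cumulative parameter motion satisfies Σ_{j=1}^{t} ‖θ_j − θ_{j−1}‖₂ ≤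 3 K R₀/(λ_min √n), and the empirical tangent kernel is stable: ‖(1/n) J(θ₀) J(θ₀)ᵀ − (1/n) J(θ_t) J(θ_t)ᵀ‖_F ≤ 6 K³ R₀/(λ_min √n). -/
import Mathlib

open Matrix

/-- The Euclidean (ℓ²) norm of a vector in `ℝ^n`. -/
noncomputable def l2norm {n : ℕ} (v : Fin n → ℝ) : ℝ :=
  Real.sqrt (∑ i, v i ^ 2)

/-- The Frobenius norm of a real matrix. -/
noncomputable def frobeniusNorm {m n : ℕ} (A : Matrix (Fin m) (Fin n) ℝ) : ℝ :=
  Real.sqrt (∑ i, ∑ j, A i j ^ 2)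

attribute [local instance] Matrix.frobeniusSeminormedAddCommGroup
  Matrix.frobeniusNormedAddCommGroup Matrix.frobeniusNormedSpace

lemma l2norm_eq_norm {m : ℕ} (v : Fin m → ℝ) :
    l2norm v = ‖(WithLp.equiv 2 (Fin m → ℝ)).symm v‖ := by
  rw [l2norm, PiLp.norm_eq_of_L2]
  congr 1
  refine Finset.sum_congr rfl fun i _ => ?_
  simp [Real.norm_eq_abs, sq_abs]

lemma frobeniusNorm_eq_norm {m n : ℕ} (A : Matrix (Fin m) (Fin n) ℝ) :
    frobeniusNorm A = ‖A‖ := by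
  rw [frobeniusNorm, Matrix.frobenius_norm_def, Real.sqrt_eq_rpow]
  congr 1
  refine Finset.sum_congr rfl fun i _ => Finset.sum_congr rfl fun j _ => ?_
  rw [Real.norm_eq_abs, Real.rpow_two, sq_abs]

lemma l2norm_nonneg {m : ℕ} (v : Fin m → ℝ) : 0 ≤ l2norm v := Real.sqrt_nonneg _

lemma frobeniusNorm_nonneg {m n : ℕ} (A : Matrix (Fin m) (Fin n) ℝ) :
    0 ≤ frobeniusNorm A := Real.sqrt_nonneg _

lemma l2norm_add_le {m : ℕ} (u v : Fin m → ℝ) :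
    l2norm (u + v) ≤ l2norm u + l2norm v := by
  simp only [l2norm_eq_norm]
  rw [show (WithLp.equiv 2 (Fin m → ℝ)).symm (u + v)
      = (WithLp.equiv 2 (Fin m → ℝ)).symm u + (WithLp.equiv 2 (Fin m → ℝ)).symm v from rfl]
  exact norm_add_le _ _

lemma l2norm_smul {m : ℕ} (c : ℝ) (v : Fin m → ℝ) :
    l2norm (c • v) = |c| * l2norm v := by
  simp only [l2norm_eq_norm]
  rw [show (WithLp.equiv 2 (Fin m → ℝ)).symm (c • v)
      = c • (WithLp.equiv 2 (Fin m → ℝ)).symm v from rfl]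
  rw [norm_smul, Real.norm_eq_abs]

lemma l2norm_sum_le {m : ℕ} (s : Finset ℕ) (f : ℕ → Fin m → ℝ) :
    l2norm (∑ j ∈ s, f j) ≤ ∑ j ∈ s, l2norm (f j) := by
  simp only [l2norm_eq_norm]
  rw [show (WithLp.equiv 2 (Fin m → ℝ)).symm (∑ j ∈ s, f j)
      = ∑ j ∈ s, (WithLp.equiv 2 (Fin m → ℝ)).symm (f j) from (map_sum (WithLp.linearEquiv 2 ℝ (Fin m → ℝ)).symm _ _)]
  exact norm_sum_le _ _

lemma frobeniusNorm_smul {m n : ℕ} (c : ℝ) (A : Matrix (Fin m) (Fin n) ℝ) :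
    frobeniusNorm (c • A) = |c| * frobeniusNorm A := by
  simp only [frobeniusNorm_eq_norm]
  rw [norm_smul, Real.norm_eq_abs]

lemma frobeniusNorm_add_le {m n : ℕ} (A B : Matrix (Fin m) (Fin n) ℝ) :
    frobeniusNorm (A + B) ≤ frobeniusNorm A + frobeniusNorm B := by
  simp only [frobeniusNorm_eq_norm]; exact norm_add_le _ _

lemma frobeniusNorm_transpose {m n : ℕ} (A : Matrix (Fin m) (Fin n) ℝ) :
    frobeniusNorm Aᵀ = frobeniusNorm A := by
  simp only [frobeniusNorm_eq_norm]; exact Matrix.frobenius_norm_transpose A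

lemma frobeniusNorm_mul_le {l m n : ℕ} (A : Matrix (Fin l) (Fin m) ℝ)
    (B : Matrix (Fin m) (Fin n) ℝ) :
    frobeniusNorm (A * B) ≤ frobeniusNorm A * frobeniusNorm B := by
  simp only [frobeniusNorm_eq_norm]; exact Matrix.frobenius_norm_mul A B

lemma l2norm_mulVec {m n : ℕ} (A : Matrix (Fin m) (Fin n) ℝ) (v : Fin n → ℝ) :
    l2norm (A.mulVec v) ≤ frobeniusNorm A * l2norm v := by
  rw [l2norm, l2norm, frobeniusNorm, ← Real.sqrt_mul (by positivity)]
  apply Real.sqrt_le_sqrt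
  rw [Finset.sum_mul]
  refine Finset.sum_le_sum fun i _ => ?_
  calc (A.mulVec v i) ^ 2 = (∑ j, A i j * v j) ^ 2 := by
        rw [Matrix.mulVec, dotProduct]
    _ ≤ (∑ j, A i j ^ 2) * (∑ j, v j ^ 2) := Finset.sum_mul_sq_le_sq_mul_sq _ _ _

lemma dotProduct_self_eq {m : ℕ} (v : Fin m → ℝ) : v ⬝ᵥ v = l2norm v ^ 2 := by
  rw [l2norm, Real.sq_sqrt (by positivity)]
  simp [dotProduct, sq]

lemma sym_mulVec_bound {N : ℕ} (M : Matrix (Fin N) (Fin N) ℝ) (hM : Mᵀ = M)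
    {c : ℝ} (hc : 0 ≤ c) (hQ : ∀ v : Fin N → ℝ, |v ⬝ᵥ M.mulVec v| ≤ c * (v ⬝ᵥ v))
    (v : Fin N → ℝ) : l2norm (M.mulVec v) ≤ c * l2norm v := by
  have hsymm : ∀ u w : Fin N → ℝ, u ⬝ᵥ M.mulVec w = w ⬝ᵥ M.mulVec u := by
    intro u w
    rw [Matrix.dotProduct_mulVec, ← Matrix.mulVec_transpose, hM, dotProduct_comm]
  have pol : ∀ u w : Fin N → ℝ, u ⬝ᵥ M.mulVec w ≤ c / 2 * (u ⬝ᵥ u + w ⬝ᵥ w) := by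
    intro u w
    have e1 : (u + w) ⬝ᵥ M.mulVec (u + w)
        = u ⬝ᵥ M.mulVec u + w ⬝ᵥ M.mulVec w + 2 * (u ⬝ᵥ M.mulVec w) := by
      simp only [Matrix.mulVec_add, add_dotProduct, dotProduct_add, hsymm w u]
      ring
    have e2 : (u - w) ⬝ᵥ M.mulVec (u - w)
        = u ⬝ᵥ M.mulVec u + w ⬝ᵥ M.mulVec w - 2 * (u ⬝ᵥ M.mulVec w) := by
      simp only [Matrix.mulVec_sub, sub_dotProduct, dotProduct_sub, hsymm w u]
      ring
    have d1 : (u + w) ⬝ᵥ (u + w) = u ⬝ᵥ u + 2 * (u ⬝ᵥ w) + w ⬝ᵥ w := by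
      simp only [add_dotProduct, dotProduct_add, dotProduct_comm w u]
      ring
    have d2 : (u - w) ⬝ᵥ (u - w) = u ⬝ᵥ u - 2 * (u ⬝ᵥ w) + w ⬝ᵥ w := by
      simp only [sub_dotProduct, dotProduct_sub, dotProduct_comm w u]
      ring
    have h1 := (abs_le.mp (hQ (u + w))).2
    have h2 := (abs_le.mp (hQ (u - w))).1
    rw [e1, d1] at h1
    rw [e2, d2] at h2
    linarith
  by_cases hMv : M.mulVec v = 0
  · rw [hMv]
    have : l2norm (0 : Fin N → ℝ) = 0 := by
      simp [l2norm]
    rw [this]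
    exact mul_nonneg hc (l2norm_nonneg v)
  · set a := l2norm (M.mulVec v) with ha
    set b := l2norm v with hb
    have hbpos : 0 < b := by
      rcases lt_or_eq_of_le (l2norm_nonneg v) with h | h
      · exact h
      · exfalso
        apply hMv
        have hv : v = 0 := by
          have h2 : v ⬝ᵥ v = 0 := by rw [dotProduct_self_eq, ← h]; ring
          have h3 : ∑ i, v i ^ 2 = 0 := by
            rw [← h2]; simp [dotProduct, sq]
          funext i
          have := (Finset.sum_eq_zero_iff_of_nonneg (fun i _ => sq_nonneg (v i))).mp h3 i
            (Finset.mem_univ i)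
          exact pow_eq_zero_iff (n := 2) (by norm_num) |>.mp this
        rw [hv, Matrix.mulVec_zero]
    have hapos : 0 < a := by
      rcases lt_or_eq_of_le (l2norm_nonneg (M.mulVec v)) with h | h
      · exact h
      · exfalso
        apply hMv
        have h2 : M.mulVec v ⬝ᵥ M.mulVec v = 0 := by rw [dotProduct_self_eq, ← h]; ring
        have h3 : ∑ i, (M.mulVec v) i ^ 2 = 0 := by
          rw [← h2]; simp [dotProduct, sq]
        funext i
        have := (Finset.sum_eq_zero_iff_of_nonneg (fun i _ => sq_nonneg ((M.mulVec v) i))).mp h3 i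
          (Finset.mem_univ i)
        exact pow_eq_zero_iff (n := 2) (by norm_num) |>.mp this
    have key := pol ((b / a) • M.mulVec v) v
    rw [smul_dotProduct, smul_dotProduct, dotProduct_smul,
      dotProduct_self_eq, dotProduct_self_eq, ← ha, ← hb] at key
    have e : (b / a) * a ^ 2 = a * b := by field_simp
    have e2 : (b / a) • ((b / a) * a ^ 2) = b ^ 2 := by
      rw [smul_eq_mul]; field_simp
    rw [smul_eq_mul, smul_eq_mul] at key
    have key2 : a * b ≤ c * b ^ 2 := by
      have : b / a * (b / a * a ^ 2) = b ^ 2 := by field_simp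
      nlinarith [key]
    have := mul_le_mul_of_nonneg_right key2 (le_of_lt (inv_pos.mpr hbpos))
    calc a = a * b * b⁻¹ := by field_simp
      _ ≤ c * b ^ 2 * b⁻¹ := this
      _ = c * b := by field_simp

section MV
variable {N P : ℕ}

/-- `mulVec` as a continuous linear map between Euclidean spaces. -/
noncomputable def mvCLM (M : Matrix (Fin N) (Fin P) ℝ) :
    EuclideanSpace ℝ (Fin P) →L[ℝ] EuclideanSpace ℝ (Fin N) :=
  ((PiLp.continuousLinearEquiv 2 ℝ (fun _ : Fin N => ℝ)).symm.toContinuousLinearMap).comp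
    ((M.mulVecLin.toContinuousLinearMap).comp
      (PiLp.continuousLinearEquiv 2 ℝ (fun _ : Fin P => ℝ)).toContinuousLinearMap)

lemma mvCLM_apply (M : Matrix (Fin N) (Fin P) ℝ) (x : EuclideanSpace ℝ (Fin P)) :
    mvCLM M x = (WithLp.equiv 2 (Fin N → ℝ)).symm
      (M.mulVec ((PiLp.continuousLinearEquiv 2 ℝ (fun _ : Fin P => ℝ)) x)) := rfl

lemma norm_eq_l2norm (x : EuclideanSpace ℝ (Fin P)) :
    ‖x‖ = l2norm ((PiLp.continuousLinearEquiv 2 ℝ (fun _ : Fin P => ℝ)) x) := by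
  rw [l2norm_eq_norm]; rfl

lemma mvCLM_norm_le (M : Matrix (Fin N) (Fin P) ℝ) : ‖mvCLM M‖ ≤ frobeniusNorm M := by
  refine ContinuousLinearMap.opNorm_le_bound _ (frobeniusNorm_nonneg M) fun x => ?_
  rw [mvCLM_apply, norm_eq_l2norm (P := P) x]
  rw [show ‖(WithLp.equiv 2 (Fin N → ℝ)).symm
      (M.mulVec ((PiLp.continuousLinearEquiv 2 ℝ (fun _ : Fin P => ℝ)) x))‖
    = l2norm (M.mulVec ((PiLp.continuousLinearEquiv 2 ℝ (fun _ : Fin P => ℝ)) x)) from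
      (l2norm_eq_norm _).symm]
  exact l2norm_mulVec _ _

lemma mvCLM_sub (A B : Matrix (Fin N) (Fin P) ℝ) : mvCLM A - mvCLM B = mvCLM (A - B) := by
  ext x
  simp [mvCLM_apply, Matrix.sub_mulVec]

lemma mean_value (f : (Fin P → ℝ) → (Fin N → ℝ))
    (J : (Fin P → ℝ) → Matrix (Fin N) (Fin P) ℝ)
    (hf : ∀ θ, HasFDerivAt f ((J θ).mulVecLin.toContinuousLinearMap) θ)
    (θ₀ : Fin P → ℝ) (ρ C : ℝ)
    (hC : ∀ θ : Fin P → ℝ, l2norm (θ - θ₀) ≤ ρ → frobeniusNorm (J θ - J θ₀) ≤ C)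
    (x y : Fin P → ℝ) (hx : l2norm (x - θ₀) ≤ ρ) (hy : l2norm (y - θ₀) ≤ ρ) :
    l2norm (f y - f x - (J θ₀).mulVec (y - x)) ≤ C * l2norm (y - x) := by
  classical
  set eP := PiLp.continuousLinearEquiv 2 ℝ (fun _ : Fin P => ℝ) with heP
  set eN := PiLp.continuousLinearEquiv 2 ℝ (fun _ : Fin N => ℝ) with heN
  set F : EuclideanSpace ℝ (Fin P) → EuclideanSpace ℝ (Fin N) :=
    fun z => eN.symm (f (eP z)) with hF
  have hFderiv : ∀ z : EuclideanSpace ℝ (Fin P), HasFDerivAt F (mvCLM (J (eP z))) z := by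
    intro z
    have h1 : HasFDerivAt (fun w : EuclideanSpace ℝ (Fin P) => f (eP w))
        (((J (eP z)).mulVecLin.toContinuousLinearMap).comp eP.toContinuousLinearMap) z :=
      (hf (eP z)).comp z eP.toContinuousLinearMap.hasFDerivAt
    exact (eN.symm.toContinuousLinearMap.hasFDerivAt).comp z h1
  set s : Set (EuclideanSpace ℝ (Fin P)) := Metric.closedBall (eP.symm θ₀) ρ with hs
  have hmem : ∀ z : EuclideanSpace ℝ (Fin P), z ∈ s ↔ l2norm (eP z - θ₀) ≤ ρ := by
    intro z
    rw [hs, Metric.mem_closedBall, dist_eq_norm, norm_eq_l2norm]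
    have : eP (z - eP.symm θ₀) = eP z - θ₀ := by simp [map_sub]
    rw [this]
  have hbound : ∀ z ∈ s, ‖mvCLM (J (eP z)) - mvCLM (J θ₀)‖ ≤ C := by
    intro z hz
    rw [mvCLM_sub]
    exact le_trans (mvCLM_norm_le _) (hC (eP z) ((hmem z).mp hz))
  have key := Convex.norm_image_sub_le_of_norm_hasFDerivWithin_le'
    (f := F) (f' := fun z => mvCLM (J (eP z))) (φ := mvCLM (J θ₀)) (C := C) (s := s)
    (fun z hz => (hFderiv z).hasFDerivWithinAt) hbound (convex_closedBall _ _)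
    ((hmem (eP.symm x)).mpr (by simpa using hx)) ((hmem (eP.symm y)).mpr (by simpa using hy))
  have e1 : F (eP.symm y) - F (eP.symm x) - mvCLM (J θ₀) (eP.symm y - eP.symm x)
      = eN.symm (f y - f x - (J θ₀).mulVec (y - x)) := by
    simp only [hF, mvCLM_apply, map_sub, Matrix.mulVec_sub]
    rfl
  rw [e1] at key
  calc l2norm (f y - f x - (J θ₀).mulVec (y - x))
      = ‖eN.symm (f y - f x - (J θ₀).mulVec (y - x))‖ := by rw [l2norm_eq_norm]; rfl
    _ ≤ C * ‖eP.symm y - eP.symm x‖ := key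
    _ = C * l2norm (y - x) := by
        rw [norm_eq_l2norm]
        have : eP (eP.symm y - eP.symm x) = y - x := by simp [map_sub]
        rw [this]
end MV

lemma l2norm_neg {m : ℕ} (v : Fin m → ℝ) : l2norm (-v) = l2norm v := by
  simp [l2norm]

lemma l2norm_zero {m : ℕ} : l2norm (0 : Fin m → ℝ) = 0 := by simp [l2norm]

set_option maxHeartbeats 1000000

/-- Global convergence of gradient descent and stability of the empirical
neural tangent kernel `Θ̂_t = (1/n) J(θ_t) J(θ_t)ᵀ` for a wide network, under local
Lipschitzness of the Jacobian, a sub-critical learning rate `η₀ < 2/(λ_min + λ_max)`, and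
closeness of the initial empirical kernel to the analytic kernel `Θ`. -/
theorem gradient_descent_convergence_and_ntk_stability {N P : ℕ}
    (f : (Fin P → ℝ) → (Fin N → ℝ))
    (J : (Fin P → ℝ) → Matrix (Fin N) (Fin P) ℝ)
    (hf : ∀ θ, HasFDerivAt f ((J θ).mulVecLin.toContinuousLinearMap) θ)
    (hJcont : Continuous J)
    (Y : Fin N → ℝ) (g : (Fin P → ℝ) → (Fin N → ℝ)) (hg : ∀ θ, g θ = f θ - Y)
    (θ₀ : Fin P → ℝ)
    (K R₀ lmin lmax : ℝ) (hK : 1 ≤ K) (hR₀ : 0 < R₀)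
    (hlmin : 0 < lmin) (hlminmax : lmin ≤ lmax)
    (Θ : Matrix (Fin N) (Fin N) ℝ) (hΘsym : Θ.IsSymm)
    (hΘlb : ∀ v : Fin N → ℝ, lmin * l2norm v ^ 2 ≤ v ⬝ᵥ Θ.mulVec v)
    (hΘub : ∀ v : Fin N → ℝ, v ⬝ᵥ Θ.mulVec v ≤ lmax * l2norm v ^ 2)
    (η₀ : ℝ) (hη₀pos : 0 < η₀) (hη₀ : η₀ < 2 / (lmin + lmax))
    (n : ℝ) (hn : 0 < n) (hnbig : (18 * K ^ 3 * R₀ / lmin ^ 2) ^ 2 ≤ n)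
    (hJlip : ∀ θ θ' : Fin P → ℝ,
      l2norm (θ - θ₀) ≤ 3 * K * R₀ / (lmin * Real.sqrt n) →
      l2norm (θ' - θ₀) ≤ 3 * K * R₀ / (lmin * Real.sqrt n) →
      frobeniusNorm (J θ - J θ') ≤ K * Real.sqrt n * l2norm (θ - θ') ∧
        frobeniusNorm (J θ) ≤ K * Real.sqrt n)
    (hg₀ : l2norm (g θ₀) ≤ R₀)
    (hΘclose : frobeniusNorm (Θ - (1 / n) • (J θ₀ * (J θ₀)ᵀ)) ≤ lmin / 3)
    (θseq : ℕ → (Fin P → ℝ)) (hθseq0 : θseq 0 = θ₀)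
    (hstep : ∀ t : ℕ,
      θseq (t + 1) = θseq t - (η₀ / n) • ((J (θseq t))ᵀ.mulVec (g (θseq t)))) :
    ∀ t : ℕ,
      l2norm (g (θseq t)) ≤ (1 - η₀ * lmin / 3) ^ t * R₀ ∧
      (∑ j ∈ Finset.range t, l2norm (θseq (j + 1) - θseq j)) ≤
        3 * K * R₀ / (lmin * Real.sqrt n) ∧
      frobeniusNorm ((1 / n) • (J θ₀ * (J θ₀)ᵀ) - (1 / n) • (J (θseq t) * (J (θseq t))ᵀ)) ≤
        6 * K ^ 3 * R₀ / (lmin * Real.sqrt n) := by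
  have hKpos : (0 : ℝ) < K := lt_of_lt_of_le one_pos hK
  have hsn : 0 < Real.sqrt n := Real.sqrt_pos.mpr hn
  have hnn : Real.sqrt n * Real.sqrt n = n := Real.mul_self_sqrt hn.le
  set sn := Real.sqrt n with hsndef
  set ρ : ℝ := 3 * K * R₀ / (lmin * sn) with hρdef
  set q : ℝ := 1 - η₀ * lmin / 3 with hqdef
  set D : ℝ := η₀ * K * R₀ / sn with hDdef
  have hρpos : 0 < ρ := by positivity
  have hDpos : 0 < D := by positivity
  have hsn_big : 18 * K ^ 3 * R₀ / lmin ^ 2 ≤ sn := by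
    have h0 : 0 ≤ 18 * K ^ 3 * R₀ / lmin ^ 2 := by positivity
    calc 18 * K ^ 3 * R₀ / lmin ^ 2
        = Real.sqrt ((18 * K ^ 3 * R₀ / lmin ^ 2) ^ 2) := (Real.sqrt_sq h0).symm
      _ ≤ sn := Real.sqrt_le_sqrt hnbig
  have hη2 : η₀ * (lmin + lmax) < 2 := (lt_div_iff₀ (by linarith)).mp hη₀
  have hηl1 : η₀ * lmin < 1 := by nlinarith
  have hq0 : 0 < q := by rw [hqdef]; linarith
  have hq1 : q < 1 := by rw [hqdef]; nlinarith
  have h18 : 18 * K ^ 3 * R₀ ≤ lmin ^ 2 * sn := by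
    have h2 := mul_le_mul_of_nonneg_left hsn_big (sq_nonneg lmin)
    calc 18 * K ^ 3 * R₀ = lmin ^ 2 * (18 * K ^ 3 * R₀ / lmin ^ 2) := by field_simp
      _ ≤ lmin ^ 2 * sn := h2
  have hKρ : 2 * K ^ 2 * ρ ≤ lmin / 3 := by
    have he : 2 * K ^ 2 * ρ = 6 * K ^ 3 * R₀ / (lmin * sn) := by rw [hρdef]; ring
    rw [he, div_le_div_iff₀ (by positivity) (by norm_num)]
    nlinarith
  have hgeom : ∀ t : ℕ, (∑ j ∈ Finset.range t, q ^ j) ≤ 3 / (η₀ * lmin) := by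
    intro t
    have h1 : (∑ j ∈ Finset.range t, q ^ j) * (1 - q) = 1 - q ^ t := by
      linear_combination -geom_sum_mul q t
    have h2 : (0 : ℝ) < 1 - q := by rw [hqdef]; simp; positivity
    have h3 : (3 : ℝ) / (η₀ * lmin) = 1 / (1 - q) := by
      rw [hqdef]
      rw [show (1 : ℝ) - (1 - η₀ * lmin / 3) = η₀ * lmin / 3 by ring, one_div_div]
    rw [h3, le_div_iff₀ h2]
    have h4 : (0 : ℝ) ≤ q ^ t := pow_nonneg hq0.le t
    linarith
  have hDgeo : D * (3 / (η₀ * lmin)) = ρ := by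
    rw [hDdef, hρdef]
    field_simp
  -- distance to θ₀ from step bounds
  have hdist : ∀ m : ℕ, (∀ j, j < m → l2norm (θseq (j + 1) - θseq j) ≤ D * q ^ j) →
      l2norm (θseq m - θ₀) ≤ ρ := by
    intro m hm
    have htel : θseq m - θ₀ = ∑ j ∈ Finset.range m, (θseq (j + 1) - θseq j) := by
      rw [Finset.sum_range_sub θseq, hθseq0]
    calc l2norm (θseq m - θ₀) ≤ ∑ j ∈ Finset.range m, l2norm (θseq (j + 1) - θseq j) := by
          rw [htel]; exact l2norm_sum_le _ _
      _ ≤ ∑ j ∈ Finset.range m, D * q ^ j :=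
          Finset.sum_le_sum fun j hj => hm j (Finset.mem_range.mp hj)
      _ = D * ∑ j ∈ Finset.range m, q ^ j := by rw [Finset.mul_sum]
      _ ≤ D * (3 / (η₀ * lmin)) := by
          exact mul_le_mul_of_nonneg_left (hgeom m) hDpos.le
      _ = ρ := hDgeo
  have hθ₀ball : l2norm (θ₀ - θ₀) ≤ ρ := by simp [l2norm_zero]; positivity
  -- step-size bound from norm of g
  have hstepbound : ∀ t : ℕ, l2norm (θseq t - θ₀) ≤ ρ →
      l2norm (θseq (t + 1) - θseq t) ≤ η₀ * K / sn * l2norm (g (θseq t)) := by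
    intro t hball
    have hΔ : θseq (t + 1) - θseq t = -((η₀ / n) • ((J (θseq t))ᵀ.mulVec (g (θseq t)))) := by
      rw [hstep t]; abel
    rw [hΔ, l2norm_neg, l2norm_smul, abs_of_pos (by positivity)]
    have h1 : l2norm ((J (θseq t))ᵀ.mulVec (g (θseq t)))
        ≤ K * sn * l2norm (g (θseq t)) := by
      calc l2norm ((J (θseq t))ᵀ.mulVec (g (θseq t)))
          ≤ frobeniusNorm (J (θseq t))ᵀ * l2norm (g (θseq t)) := l2norm_mulVec _ _
        _ ≤ K * sn * l2norm (g (θseq t)) := by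
            rw [frobeniusNorm_transpose]
            exact mul_le_mul_of_nonneg_right ((hJlip (θseq t) θ₀ hball hθ₀ball).2)
              (l2norm_nonneg _)
    calc η₀ / n * l2norm ((J (θseq t))ᵀ.mulVec (g (θseq t)))
        ≤ η₀ / n * (K * sn * l2norm (g (θseq t))) :=
          mul_le_mul_of_nonneg_left h1 (by positivity)
      _ = η₀ * K / sn * l2norm (g (θseq t)) := by
          rw [← hnn]; field_simp
  -- main induction
  have main : ∀ t : ℕ, l2norm (g (θseq t)) ≤ q ^ t * R₀ ∧
      ∀ j, j < t → l2norm (θseq (j + 1) - θseq j) ≤ D * q ^ j := by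
    intro t
    induction t with
    | zero =>
      refine ⟨by simpa [hθseq0] using hg₀, fun j hj => absurd hj (Nat.not_lt_zero j)⟩
    | succ t ih =>
      obtain ⟨ihg, ihstep⟩ := ih
      have hball_t : l2norm (θseq t - θ₀) ≤ ρ := hdist t ihstep
      have hgt := l2norm_nonneg (g (θseq t))
      have hstept : l2norm (θseq (t + 1) - θseq t) ≤ D * q ^ t := by
        calc l2norm (θseq (t + 1) - θseq t) ≤ η₀ * K / sn * l2norm (g (θseq t)) :=
              hstepbound t hball_t
          _ ≤ η₀ * K / sn * (q ^ t * R₀) := mul_le_mul_of_nonneg_left ihg (by positivity)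
          _ = D * q ^ t := by rw [hDdef]; ring
      have hallsteps : ∀ j, j < t + 1 → l2norm (θseq (j + 1) - θseq j) ≤ D * q ^ j := by
        intro j hj
        rcases Nat.lt_succ_iff_lt_or_eq.mp hj with h | h
        · exact ihstep j h
        · subst h; exact hstept
      have hball_t1 : l2norm (θseq (t + 1) - θ₀) ≤ ρ := hdist (t + 1) hallsteps
      -- matrices
      set Jt := J (θseq t) with hJtdef
      set J0 := J θ₀ with hJ0def
      set gt := g (θseq t) with hgtdef
      have hJtF : frobeniusNorm Jt ≤ K * sn := (hJlip (θseq t) θ₀ hball_t hθ₀ball).2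
      have hJ0F : frobeniusNorm J0 ≤ K * sn := (hJlip θ₀ θ₀ hθ₀ball hθ₀ball).2
      have hJt0 : frobeniusNorm (J0 - Jt) ≤ K * sn * ρ := by
        calc frobeniusNorm (J0 - Jt) ≤ K * sn * l2norm (θ₀ - θseq t) :=
              (hJlip θ₀ (θseq t) hθ₀ball hball_t).1
          _ ≤ K * sn * ρ := by
              have : l2norm (θ₀ - θseq t) = l2norm (θseq t - θ₀) := by
                rw [show θ₀ - θseq t = -(θseq t - θ₀) by abel, l2norm_neg]
              rw [this]
              exact mul_le_mul_of_nonneg_left hball_t (by positivity)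
      -- mean value remainder
      set Δ := θseq (t + 1) - θseq t with hΔdef
      set r := g (θseq (t + 1)) - g (θseq t) - J0.mulVec Δ with hrdef
      have hgsub : g (θseq (t + 1)) - g (θseq t) = f (θseq (t + 1)) - f (θseq t) := by
        rw [hg, hg]; abel
      have hrbound : l2norm r ≤ K * sn * ρ * l2norm Δ := by
        rw [hrdef, hgsub]
        refine mean_value f J hf θ₀ ρ (K * sn * ρ) ?_ (θseq t) (θseq (t + 1)) hball_t hball_t1
        intro θ hθ
        calc frobeniusNorm (J θ - J θ₀) ≤ K * sn * l2norm (θ - θ₀) :=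
              (hJlip θ θ₀ hθ hθ₀ball).1
          _ ≤ K * sn * ρ := mul_le_mul_of_nonneg_left hθ (by positivity)
      have hΔbound : l2norm Δ ≤ η₀ * K / sn * l2norm gt := hstepbound t hball_t
      -- decomposition
      set B : Matrix (Fin N) (Fin N) ℝ := (1 / n) • (J0 * Jtᵀ) with hBdef
      set B₀ : Matrix (Fin N) (Fin N) ℝ := (1 / n) • (J0 * J0ᵀ) with hB₀def
      set M : Matrix (Fin N) (Fin N) ℝ := 1 - η₀ • Θ with hMdef
      have hΔeq : Δ = -((η₀ / n) • (Jtᵀ.mulVec gt)) := by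
        rw [hΔdef, hstep t]; abel
      have hdec : g (θseq (t + 1)) = (M.mulVec gt + η₀ • ((Θ - B).mulVec gt)) + r := by
        have h1 : M.mulVec gt + η₀ • ((Θ - B).mulVec gt) = gt + J0.mulVec Δ := by
          rw [hΔeq, hMdef, hBdef]
          simp only [Matrix.sub_mulVec, Matrix.one_mulVec, Matrix.smul_mulVec,
            Matrix.mulVec_neg, Matrix.mulVec_smul, Matrix.mulVec_mulVec, smul_smul]
          module
        rw [h1, hrdef]; abel
      -- bound on M.mulVec gt
      have hMbound : l2norm (M.mulVec gt) ≤ (1 - η₀ * lmin) * l2norm gt := by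
        refine sym_mulVec_bound M ?_ (by linarith) ?_ gt
        · rw [hMdef, Matrix.transpose_sub, Matrix.transpose_one, Matrix.transpose_smul, hΘsym]
        · intro v
          have hvv : v ⬝ᵥ v = l2norm v ^ 2 := dotProduct_self_eq v
          have hq1 : v ⬝ᵥ M.mulVec v = v ⬝ᵥ v - η₀ * (v ⬝ᵥ Θ.mulVec v) := by
            rw [hMdef]
            simp only [Matrix.sub_mulVec, Matrix.one_mulVec, Matrix.smul_mulVec,
              dotProduct_sub, dotProduct_smul, smul_eq_mul]
          have hl := hΘlb v
          have hu := hΘub v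
          have hv0 : 0 ≤ l2norm v ^ 2 := sq_nonneg _
          have hx1 := mul_le_mul_of_nonneg_left hl hη₀pos.le
          have hx2 := mul_le_mul_of_nonneg_left hu hη₀pos.le
          have hx3 : 0 ≤ (2 - η₀ * (lmin + lmax)) * l2norm v ^ 2 :=
            mul_nonneg (by linarith) hv0
          rw [hq1, hvv, abs_le]
          constructor
          · nlinarith [hx2, hx3]
          · nlinarith [hx1]
      -- bound on Θ - B
      have hΘB : frobeniusNorm (Θ - B) ≤ lmin / 3 + K ^ 2 * ρ := by
        have hsplit : Θ - B = (Θ - B₀) + (B₀ - B) := by abel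
        have h2 : frobeniusNorm (B₀ - B) ≤ K ^ 2 * ρ := by
          have he : B₀ - B = (1 / n) • (J0 * (J0ᵀ - Jtᵀ)) := by
            rw [hB₀def, hBdef, ← smul_sub, ← Matrix.mul_sub]
          rw [he, frobeniusNorm_smul, abs_of_pos (by positivity)]
          have h3 : frobeniusNorm (J0 * (J0ᵀ - Jtᵀ)) ≤ K * sn * (K * sn * ρ) := by
            calc frobeniusNorm (J0 * (J0ᵀ - Jtᵀ))
                ≤ frobeniusNorm J0 * frobeniusNorm (J0ᵀ - Jtᵀ) := frobeniusNorm_mul_le _ _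
              _ ≤ K * sn * (K * sn * ρ) := by
                  have h4 : frobeniusNorm (J0ᵀ - Jtᵀ) = frobeniusNorm (J0 - Jt) := by
                    rw [show J0ᵀ - Jtᵀ = (J0 - Jt)ᵀ from (Matrix.transpose_sub _ _).symm,
                      frobeniusNorm_transpose]
                  rw [h4]
                  exact mul_le_mul hJ0F hJt0 (frobeniusNorm_nonneg _) (by positivity)
          calc 1 / n * frobeniusNorm (J0 * (J0ᵀ - Jtᵀ)) ≤ 1 / n * (K * sn * (K * sn * ρ)) :=
                mul_le_mul_of_nonneg_left h3 (by positivity)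
            _ = K ^ 2 * ρ := by rw [← hnn]; field_simp
        calc frobeniusNorm (Θ - B) ≤ frobeniusNorm (Θ - B₀) + frobeniusNorm (B₀ - B) := by
              rw [hsplit]; exact frobeniusNorm_add_le _ _
          _ ≤ lmin / 3 + K ^ 2 * ρ := add_le_add hΘclose h2
      -- assemble
      have hfinal : l2norm (g (θseq (t + 1))) ≤ q * l2norm gt := by
        have t1 : l2norm (g (θseq (t + 1)))
            ≤ l2norm (M.mulVec gt) + l2norm (η₀ • ((Θ - B).mulVec gt)) + l2norm r := by
          rw [hdec]
          calc l2norm ((M.mulVec gt + η₀ • ((Θ - B).mulVec gt)) + r)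
              ≤ l2norm (M.mulVec gt + η₀ • ((Θ - B).mulVec gt)) + l2norm r :=
                l2norm_add_le _ _
            _ ≤ l2norm (M.mulVec gt) + l2norm (η₀ • ((Θ - B).mulVec gt)) + l2norm r := by
                linarith [l2norm_add_le (M.mulVec gt) (η₀ • ((Θ - B).mulVec gt))]
        have t2 : l2norm (η₀ • ((Θ - B).mulVec gt)) ≤ η₀ * ((lmin / 3 + K ^ 2 * ρ) * l2norm gt) := by
          rw [l2norm_smul, abs_of_pos hη₀pos]
          refine mul_le_mul_of_nonneg_left ?_ hη₀pos.le
          calc l2norm ((Θ - B).mulVec gt) ≤ frobeniusNorm (Θ - B) * l2norm gt :=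
                l2norm_mulVec _ _
            _ ≤ (lmin / 3 + K ^ 2 * ρ) * l2norm gt :=
                mul_le_mul_of_nonneg_right hΘB (l2norm_nonneg _)
        have t3 : l2norm r ≤ η₀ * K ^ 2 * ρ * l2norm gt := by
          calc l2norm r ≤ K * sn * ρ * l2norm Δ := hrbound
            _ ≤ K * sn * ρ * (η₀ * K / sn * l2norm gt) :=
                mul_le_mul_of_nonneg_left hΔbound (by positivity)
            _ = η₀ * K ^ 2 * ρ * l2norm gt := by field_simp
        have hcoeff : (1 - η₀ * lmin) + η₀ * (lmin / 3 + K ^ 2 * ρ) + η₀ * K ^ 2 * ρ ≤ q := by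
          rw [hqdef]; nlinarith
        calc l2norm (g (θseq (t + 1)))
            ≤ (1 - η₀ * lmin) * l2norm gt + η₀ * ((lmin / 3 + K ^ 2 * ρ) * l2norm gt)
              + η₀ * K ^ 2 * ρ * l2norm gt := by linarith
          _ = ((1 - η₀ * lmin) + η₀ * (lmin / 3 + K ^ 2 * ρ) + η₀ * K ^ 2 * ρ) * l2norm gt := by
              ring
          _ ≤ q * l2norm gt := mul_le_mul_of_nonneg_right hcoeff hgt
      refine ⟨?_, hallsteps⟩
      calc l2norm (g (θseq (t + 1))) ≤ q * l2norm gt := hfinal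
        _ ≤ q * (q ^ t * R₀) := mul_le_mul_of_nonneg_left ihg hq0.le
        _ = q ^ (t + 1) * R₀ := by ring
  -- conclude
  intro t
  obtain ⟨h1, h2⟩ := main t
  have hball_t : l2norm (θseq t - θ₀) ≤ ρ := hdist t h2
  refine ⟨h1, ?_, ?_⟩
  · calc (∑ j ∈ Finset.range t, l2norm (θseq (j + 1) - θseq j))
        ≤ ∑ j ∈ Finset.range t, D * q ^ j :=
          Finset.sum_le_sum fun j hj => h2 j (Finset.mem_range.mp hj)
      _ = D * ∑ j ∈ Finset.range t, q ^ j := by rw [Finset.mul_sum]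
      _ ≤ D * (3 / (η₀ * lmin)) := mul_le_mul_of_nonneg_left (hgeom t) hDpos.le
      _ = ρ := hDgeo
  · set Jt := J (θseq t) with hJtdef
    set J0 := J θ₀ with hJ0def
    have hJtF : frobeniusNorm Jt ≤ K * sn := (hJlip (θseq t) θ₀ hball_t hθ₀ball).2
    have hJ0F : frobeniusNorm J0 ≤ K * sn := (hJlip θ₀ θ₀ hθ₀ball hθ₀ball).2
    have hJt0 : frobeniusNorm (J0 - Jt) ≤ K * sn * ρ := by
      calc frobeniusNorm (J0 - Jt) ≤ K * sn * l2norm (θ₀ - θseq t) :=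
            (hJlip θ₀ (θseq t) hθ₀ball hball_t).1
        _ ≤ K * sn * ρ := by
            have : l2norm (θ₀ - θseq t) = l2norm (θseq t - θ₀) := by
              rw [show θ₀ - θseq t = -(θseq t - θ₀) by abel, l2norm_neg]
            rw [this]
            exact mul_le_mul_of_nonneg_left hball_t (by positivity)
    have hsplit : (1 / n) • (J0 * J0ᵀ) - (1 / n) • (Jt * Jtᵀ)
        = (1 / n) • (J0 * (J0 - Jt)ᵀ) + (1 / n) • ((J0 - Jt) * Jtᵀ) := by
      rw [← smul_add, ← smul_sub]
      congr 1
      rw [Matrix.transpose_sub, Matrix.mul_sub, Matrix.sub_mul]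
      abel
    calc frobeniusNorm ((1 / n) • (J0 * J0ᵀ) - (1 / n) • (Jt * Jtᵀ))
        ≤ frobeniusNorm ((1 / n) • (J0 * (J0 - Jt)ᵀ))
          + frobeniusNorm ((1 / n) • ((J0 - Jt) * Jtᵀ)) := by
          rw [hsplit]; exact frobeniusNorm_add_le _ _
      _ ≤ 1 / n * (K * sn * (K * sn * ρ)) + 1 / n * (K * sn * ρ * (K * sn)) := by
          have e1 : frobeniusNorm ((1 / n) • (J0 * (J0 - Jt)ᵀ))
              = 1 / n * frobeniusNorm (J0 * (J0 - Jt)ᵀ) := by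
            rw [frobeniusNorm_smul, abs_of_pos (by positivity)]
          have e2 : frobeniusNorm ((1 / n) • ((J0 - Jt) * Jtᵀ))
              = 1 / n * frobeniusNorm ((J0 - Jt) * Jtᵀ) := by
            rw [frobeniusNorm_smul, abs_of_pos (by positivity)]
          rw [e1, e2]
          have b1 : frobeniusNorm (J0 * (J0 - Jt)ᵀ) ≤ K * sn * (K * sn * ρ) := by
            calc frobeniusNorm (J0 * (J0 - Jt)ᵀ)
                ≤ frobeniusNorm J0 * frobeniusNorm (J0 - Jt)ᵀ := frobeniusNorm_mul_le _ _
              _ ≤ K * sn * (K * sn * ρ) := by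
                  rw [frobeniusNorm_transpose]
                  exact mul_le_mul hJ0F hJt0 (frobeniusNorm_nonneg _) (by positivity)
          have b2 : frobeniusNorm ((J0 - Jt) * Jtᵀ) ≤ K * sn * ρ * (K * sn) := by
            calc frobeniusNorm ((J0 - Jt) * Jtᵀ)
                ≤ frobeniusNorm (J0 - Jt) * frobeniusNorm Jtᵀ := frobeniusNorm_mul_le _ _
              _ ≤ K * sn * ρ * (K * sn) := by
                  rw [frobeniusNorm_transpose]
                  exact mul_le_mul hJt0 hJtF (frobeniusNorm_nonneg _) (by positivity)
          have hn' : (0:ℝ) < 1 / n := by positivity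
          exact add_le_add (mul_le_mul_of_nonneg_left b1 hn'.le)
            (mul_le_mul_of_nonneg_left b2 hn'.le)
      _ = 6 * K ^ 3 * R₀ / (lmin * sn) := by
          rw [hρdef, ← hnn]; field_simp; ring
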